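/- arXiv:2005.00060 — 2 statements merged into one kernel-verified Lean document; each statement's English description precedes it below -/
import Mathlib

section
/- Let E be a nontrivial finite-dimensional real inner product space. For i = 1, 2, let Hᵢ : E → E be a symmetric linear operator with largest eigenvalue λᵢ, let vᵢ ∈ E be a unit eigenvector of Hᵢ with Hᵢ vᵢ = λᵢ vᵢ, let uᵢ ∈ E be a unit vector with ⟨uᵢ, vᵢ⟩ = c for a common value c ∈ ℝ, and set hᵢ := ⟨uᵢ − vᵢ, Hᵢ(uᵢ − vᵢ)⟩. Then (2c − 1)·λ₂ − λ₁ + h₂ ≤ ⟨u₂, H₂ u₂⟩ − ⟨u₁, H₁ u₁⟩ ≤ λ₂ − (2c − 1)·λ₁ − h₁. -/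
/-!
Expanding `⟪u - v, H (u - v)⟫` with `H v = λ v`, `‖v‖ = 1` and the symmetry of `H` gives
`⟪u, H u⟫ = (2⟪u, v⟫ - 1) λ + ⟪u - v, H (u - v)⟫`. On the other hand the supremum of the
Rayleigh quotient of a symmetric operator in finite dimension is an eigenvalue, so
`⟪u, H u⟫ ≤ λ` for unit `u` when `λ` is the largest eigenvalue. Each side of the sandwich is one
identity combined with the other Rayleigh bound.
-/

open scoped RealInnerProductSpace

namespace LinearMap.IsSymmetric

variable {E : Type*} [NormedAddCommGroup E] [InnerProductSpace ℝ E] {T : E →ₗ[ℝ] E}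

theorem inner_sub_apply_sub_of_apply_eq_smul (hT : T.IsSymmetric) {lam : ℝ} {v : E}
    (hv : T v = lam • v) (u : E) :
    ⟪u - v, T (u - v)⟫ = ⟪u, T u⟫ - 2 * lam * ⟪u, v⟫ + lam * ‖v‖ ^ 2 := by
  have hvu : ⟪v, T u⟫ = lam * ⟪u, v⟫ := by
    rw [← hT, hv, real_inner_smul_left, real_inner_comm]
  rw [map_sub, inner_sub_left, inner_sub_right, inner_sub_right, hvu, hv,
    real_inner_smul_right, real_inner_smul_right, real_inner_self_eq_norm_sq]
  ring

theorem bddAbove_rayleigh [FiniteDimensional ℝ E] (T : E →ₗ[ℝ] E) :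
    BddAbove (Set.range fun x : { x : E // x ≠ 0 } => ⟪T x, x⟫ / ‖(x : E)‖ ^ 2) :=
  ⟨‖T.toContinuousLinearMap‖, by
    rintro _ ⟨x, rfl⟩
    exact (le_abs_self _).trans (T.toContinuousLinearMap.rayleighQuotient_le_norm x)⟩

theorem inner_apply_self_le_of_mem_upperBounds [FiniteDimensional ℝ E] (hT : T.IsSymmetric)
    {lam : ℝ} (hlam : lam ∈ upperBounds {μ : ℝ | Module.End.HasEigenvalue T μ}) (u : E) :
    ⟪u, T u⟫ ≤ lam * ‖u‖ ^ 2 := by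
  rcases eq_or_ne u 0 with rfl | hu
  · simp
  have : Nontrivial E := ⟨⟨u, 0, hu⟩⟩
  have hsup := hlam hT.hasEigenvalue_iSup_of_finiteDimensional
  have hle := (le_ciSup (bddAbove_rayleigh T) ⟨u, hu⟩).trans hsup
  rwa [div_le_iff₀ (by positivity), real_inner_comm] at hle

end LinearMap.IsSymmetric

open LinearMap.IsSymmetric

theorem rayleigh_difference_sandwich_general
    {E : Type*} [NormedAddCommGroup E] [InnerProductSpace ℝ E]
    [FiniteDimensional ℝ E]
    (H₁ H₂ : E →ₗ[ℝ] E)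
    (hH₁ : ∀ a b : E, ⟪H₁ a, b⟫ = ⟪a, H₁ b⟫)
    (hH₂ : ∀ a b : E, ⟪H₂ a, b⟫ = ⟪a, H₂ b⟫)
    (lam₁ lam₂ : ℝ)
    (h₁max : IsGreatest {μ : ℝ | Module.End.HasEigenvalue H₁ μ} lam₁)
    (h₂max : IsGreatest {μ : ℝ | Module.End.HasEigenvalue H₂ μ} lam₂)
    (v₁ v₂ : E) (hv₁ : ‖v₁‖ = 1) (hv₂ : ‖v₂‖ = 1)
    (he₁ : H₁ v₁ = lam₁ • v₁) (he₂ : H₂ v₂ = lam₂ • v₂)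
    (u₁ u₂ : E) (hu₁ : ‖u₁‖ = 1) (hu₂ : ‖u₂‖ = 1)
    (c : ℝ) (hc₁ : ⟪u₁, v₁⟫ = c) (hc₂ : ⟪u₂, v₂⟫ = c)
    (h₁ h₂ : ℝ)
    (hh₁ : h₁ = ⟪u₁ - v₁, H₁ (u₁ - v₁)⟫)
    (hh₂ : h₂ = ⟪u₂ - v₂, H₂ (u₂ - v₂)⟫) :
    (2 * c - 1) * lam₂ - lam₁ + h₂ ≤ ⟪u₂, H₂ u₂⟫ - ⟪u₁, H₁ u₁⟫ ∧
      ⟪u₂, H₂ u₂⟫ - ⟪u₁, H₁ u₁⟫ ≤ lam₂ - (2 * c - 1) * lam₁ - h₁ := by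
  have expand₁ := inner_sub_apply_sub_of_apply_eq_smul hH₁ he₁ u₁
  have expand₂ := inner_sub_apply_sub_of_apply_eq_smul hH₂ he₂ u₂
  have bound₁ := inner_apply_self_le_of_mem_upperBounds hH₁ h₁max.2 u₁
  have bound₂ := inner_apply_self_le_of_mem_upperBounds hH₂ h₂max.2 u₂
  rw [← hh₁, hc₁, hv₁] at expand₁
  rw [← hh₂, hc₂, hv₂] at expand₂
  rw [hu₁] at bound₁
  rw [hu₂] at bound₂
  constructor <;> linarith

/-- Sandwich inequality for the difference of two Rayleigh quotients, the quantitative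
core of Proposition 1. -/
theorem rayleigh_difference_sandwich
    {E : Type*} [NormedAddCommGroup E] [InnerProductSpace ℝ E]
    [FiniteDimensional ℝ E] [Nontrivial E]
    (H₁ H₂ : E →ₗ[ℝ] E)
    (hH₁ : ∀ a b : E, ⟪H₁ a, b⟫ = ⟪a, H₁ b⟫)
    (hH₂ : ∀ a b : E, ⟪H₂ a, b⟫ = ⟪a, H₂ b⟫)
    (lam₁ lam₂ : ℝ)
    (h₁max : IsGreatest {μ : ℝ | Module.End.HasEigenvalue H₁ μ} lam₁)
    (h₂max : IsGreatest {μ : ℝ | Module.End.HasEigenvalue H₂ μ} lam₂)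
    (v₁ v₂ : E) (hv₁ : ‖v₁‖ = 1) (hv₂ : ‖v₂‖ = 1)
    (he₁ : H₁ v₁ = lam₁ • v₁) (he₂ : H₂ v₂ = lam₂ • v₂)
    (u₁ u₂ : E) (hu₁ : ‖u₁‖ = 1) (hu₂ : ‖u₂‖ = 1)
    (c : ℝ) (hc₁ : ⟪u₁, v₁⟫ = c) (hc₂ : ⟪u₂, v₂⟫ = c)
    (h₁ h₂ : ℝ)
    (hh₁ : h₁ = ⟪u₁ - v₁, H₁ (u₁ - v₁)⟫)
    (hh₂ : h₂ = ⟪u₂ - v₂, H₂ (u₂ - v₂)⟫) :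
    (2 * c - 1) * lam₂ - lam₁ + h₂ ≤ ⟪u₂, H₂ u₂⟫ - ⟪u₁, H₁ u₁⟫ ∧
      ⟪u₂, H₂ u₂⟫ - ⟪u₁, H₁ u₁⟫ ≤ lam₂ - (2 * c - 1) * lam₁ - h₁ :=
  rayleigh_difference_sandwich_general H₁ H₂ hH₁ hH₂ lam₁ lam₂ h₁max h₂max v₁ v₂ hv₁ hv₂ he₁ he₂ u₁
    u₂ hu₁ hu₂ c hc₁ hc₂ h₁ h₂ hh₁ hh₂
end

section
/- Let E be a nontrivial finite-dimensional real inner product space and x ∈ E. For i = 1, 2, let lᵢ : E → ℝ be a function, gᵢ ∈ E a nonzero vector, and Hᵢ : E → E a symmetric linear operator such that lᵢ(x + δ) = lᵢ(x) + ⟨gᵢ, δ⟩ + (1/2)·⟨δ, Hᵢ δ⟩ for all δ ∈ E. Assume l₁(x) = l₂(x) and ‖g₁‖ = ‖g₂‖. Let λᵢ be the largest eigenvalue of Hᵢ, let vᵢ be a unit eigenvector of Hᵢ with Hᵢ vᵢ = λᵢ vᵢ, suppose the normalized gradients ĝᵢ := gᵢ/‖gᵢ‖ satisfy ⟨ĝᵢ,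 vᵢ⟩ = c for a common value c ∈ ℝ, and set hᵢ := ⟨ĝᵢ − vᵢ, Hᵢ(ĝᵢ − vᵢ)⟩. Fix ε > 0 and define Rᵢ := lᵢ(x + ε·ĝᵢ). Then (ε²/2)·((2c − 1)·λ₂ − λ₁ + h₂) ≤ R₂ − R₁ ≤ (ε²/2)·(λ₂ − (2c − 1)·λ₁ − h₁). In particular, if ĝᵢ = vᵢ (perfect alignment, c = 1, hᵢ = 0), then Rᵢ = lᵢ(x) + ε·‖gᵢ‖ + (ε²/2)·λᵢ and R₂ − R₁ = (ε²/2)·(λ₂ − λ₁), so the first-order robustness loss is an increasing affine function of the largest eigenvalue of the input Hessian. -/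
/-!
Evaluating the exact quadratic model at `x + ε ĝ` gives `R = l x + ε ‖g‖ + (ε²/2) ⟪ĝ, H ĝ⟫`; with
equal values and gradient norms, `R₂ - R₁` is `ε²/2` times the difference of the Rayleigh
quotients `qᵢ = ⟪ĝᵢ, Hᵢ ĝᵢ⟫`. Each `qᵢ` is bounded above by `λᵢ` (the top of the Rayleigh quotient
of a symmetric operator is its largest eigenvalue), and expanding `hᵢ` around the eigenvector
`vᵢ` gives `qᵢ = hᵢ + (2c - 1) λᵢ` exactly.
-/

open scoped RealInnerProductSpace

theorem LinearMap.IsSymmetric.re_inner_map_self_le_mul_norm_sq {𝕜 E : Type*} [RCLike 𝕜]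
    [NormedAddCommGroup E] [InnerProductSpace 𝕜 E] [FiniteDimensional 𝕜 E]
    {T : E →ₗ[𝕜] E} (hT : T.IsSymmetric) {lam : ℝ}
    (hlam : lam ∈ upperBounds {μ : ℝ | Module.End.HasEigenvalue T (μ : 𝕜)}) (u : E) :
    RCLike.re (inner 𝕜 (T u) u) ≤ lam * ‖u‖ ^ 2 := by
  rcases eq_or_ne u 0 with rfl | hu
  · simp
  have : Nontrivial E := nontrivial_of_ne u 0 hu
  have hbdd : BddAbove (Set.range fun x : {x : E // x ≠ 0} ↦
      RCLike.re (inner 𝕜 (T x) (x : E)) / ‖(x : E)‖ ^ 2) := by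
    refine ⟨‖LinearMap.toContinuousLinearMap T‖, ?_⟩
    rintro _ ⟨x, rfl⟩
    exact (le_abs_self _).trans ((LinearMap.toContinuousLinearMap T).rayleighQuotient_le_norm x)
  have hquot := (le_ciSup hbdd ⟨u, hu⟩).trans (hlam hT.hasEigenvalue_iSup_of_finiteDimensional)
  rwa [div_le_iff₀ (by positivity)] at hquot

section Real

variable {E : Type*} [NormedAddCommGroup E] [InnerProductSpace ℝ E]

theorem LinearMap.IsSymmetric.real_inner_map_self_le_of_norm_eq_one [FiniteDimensional ℝ E]
    {T : E →ₗ[ℝ] E} (hT : T.IsSymmetric) {lam : ℝ}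
    (hlam : lam ∈ upperBounds {μ : ℝ | Module.End.HasEigenvalue T μ}) {u : E} (hu : ‖u‖ = 1) :
    ⟪u, T u⟫ ≤ lam := by
  simpa [hu, real_inner_comm] using hT.re_inner_map_self_le_mul_norm_sq (𝕜 := ℝ) hlam u

theorem LinearMap.IsSymmetric.real_inner_sub_map_sub_of_eigenvector {T : E →ₗ[ℝ] E}
    (hT : T.IsSymmetric) {lam : ℝ} {v : E} (hv : ‖v‖ = 1) (he : T v = lam • v) (u : E) :
    ⟪u - v, T (u - v)⟫ = ⟪u, T u⟫ - (2 * ⟪u, v⟫ - 1) * lam := by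
  have huv : ⟪u, T v⟫ = lam * ⟪u, v⟫ := by rw [he, real_inner_smul_right]
  have hvu : ⟪v, T u⟫ = lam * ⟪u, v⟫ := by rw [← hT, he, real_inner_smul_left, real_inner_comm]
  have hvv : ⟪v, T v⟫ = lam := by
    rw [he, real_inner_smul_right, real_inner_self_eq_norm_sq, hv]; ring
  rw [map_sub, inner_sub_left, inner_sub_right, inner_sub_right, huv, hvu, hvv]
  ring

theorem real_inner_inv_norm_smul_self (g : E) : ⟪g, ‖g‖⁻¹ • g⟫ = ‖g‖ := by
  rcases eq_or_ne g 0 with rfl | hg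
  · simp
  rw [real_inner_smul_right, real_inner_self_eq_norm_sq]
  field_simp

theorem apply_add_smul_of_quadratic_expansion {l : E → ℝ} {x g : E} {H : E →ₗ[ℝ] E}
    (hexp : ∀ δ : E, l (x + δ) = l x + ⟪g, δ⟫ + (1 / 2) * ⟪δ, H δ⟫) (ε : ℝ) (u : E) :
    l (x + ε • u) = l x + ε * ⟪g, u⟫ + (ε ^ 2 / 2) * ⟪u, H u⟫ := by
  rw [hexp, real_inner_smul_right, map_smul, real_inner_smul_left, real_inner_smul_right]
  ring

end Real

theorem robustness_loss_correlates_with_largest_eigenvalue_general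
    {E : Type*} [NormedAddCommGroup E] [InnerProductSpace ℝ E]
    [FiniteDimensional ℝ E]
    (x : E) (l₁ l₂ : E → ℝ) (g₁ g₂ : E) (hg₁ : g₁ ≠ 0) (hg₂ : g₂ ≠ 0)
    (H₁ H₂ : E →ₗ[ℝ] E)
    (hsym₁ : ∀ a b : E, ⟪H₁ a, b⟫ = ⟪a, H₁ b⟫)
    (hsym₂ : ∀ a b : E, ⟪H₂ a, b⟫ = ⟪a, H₂ b⟫)
    (hexp₁ : ∀ δ : E, l₁ (x + δ) = l₁ x + ⟪g₁, δ⟫ + (1 / 2) * ⟪δ, H₁ δ⟫)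
    (hexp₂ : ∀ δ : E, l₂ (x + δ) = l₂ x + ⟪g₂, δ⟫ + (1 / 2) * ⟪δ, H₂ δ⟫)
    (hl : l₁ x = l₂ x) (hnorm : ‖g₁‖ = ‖g₂‖)
    (lam₁ lam₂ : ℝ)
    (h₁max : IsGreatest {μ : ℝ | Module.End.HasEigenvalue H₁ μ} lam₁)
    (h₂max : IsGreatest {μ : ℝ | Module.End.HasEigenvalue H₂ μ} lam₂)
    (v₁ v₂ : E) (hv₁ : ‖v₁‖ = 1) (hv₂ : ‖v₂‖ = 1)
    (he₁ : H₁ v₁ = lam₁ • v₁) (he₂ : H₂ v₂ = lam₂ • v₂)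
    (ghat₁ ghat₂ : E) (hghat₁ : ghat₁ = ‖g₁‖⁻¹ • g₁) (hghat₂ : ghat₂ = ‖g₂‖⁻¹ • g₂)
    (c : ℝ) (hc₁ : ⟪ghat₁, v₁⟫ = c) (hc₂ : ⟪ghat₂, v₂⟫ = c)
    (h₁ h₂ : ℝ)
    (hh₁ : h₁ = ⟪ghat₁ - v₁, H₁ (ghat₁ - v₁)⟫)
    (hh₂ : h₂ = ⟪ghat₂ - v₂, H₂ (ghat₂ - v₂)⟫)
    (ε : ℝ)
    (R₁ R₂ : ℝ) (hR₁ : R₁ = l₁ (x + ε • ghat₁)) (hR₂ : R₂ = l₂ (x + ε • ghat₂)) :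
    ((ε ^ 2 / 2) * ((2 * c - 1) * lam₂ - lam₁ + h₂) ≤ R₂ - R₁ ∧
        R₂ - R₁ ≤ (ε ^ 2 / 2) * (lam₂ - (2 * c - 1) * lam₁ - h₁)) ∧
      (ghat₁ = v₁ → ghat₂ = v₂ →
        R₁ = l₁ x + ε * ‖g₁‖ + (ε ^ 2 / 2) * lam₁ ∧
        R₂ = l₂ x + ε * ‖g₂‖ + (ε ^ 2 / 2) * lam₂ ∧
        R₂ - R₁ = (ε ^ 2 / 2) * (lam₂ - lam₁)) := by
  have hR₁' : R₁ = l₁ x + ε * ‖g₁‖ + (ε ^ 2 / 2) * ⟪ghat₁, H₁ ghat₁⟫ := by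
    rw [hR₁, apply_add_smul_of_quadratic_expansion hexp₁, hghat₁, real_inner_inv_norm_smul_self]
  have hR₂' : R₂ = l₂ x + ε * ‖g₂‖ + (ε ^ 2 / 2) * ⟪ghat₂, H₂ ghat₂⟫ := by
    rw [hR₂, apply_add_smul_of_quadratic_expansion hexp₂, hghat₂, real_inner_inv_norm_smul_self]
  have hdiff : R₂ - R₁ = (ε ^ 2 / 2) * (⟪ghat₂, H₂ ghat₂⟫ - ⟪ghat₁, H₁ ghat₁⟫) := by
    rw [hR₁', hR₂', hl, hnorm]; ring
  have hq₁ : ⟪ghat₁, H₁ ghat₁⟫ = h₁ + (2 * c - 1) * lam₁ := by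
    rw [hh₁, LinearMap.IsSymmetric.real_inner_sub_map_sub_of_eigenvector hsym₁ hv₁ he₁, hc₁]; ring
  have hq₂ : ⟪ghat₂, H₂ ghat₂⟫ = h₂ + (2 * c - 1) * lam₂ := by
    rw [hh₂, LinearMap.IsSymmetric.real_inner_sub_map_sub_of_eigenvector hsym₂ hv₂ he₂, hc₂]; ring
  have hq₁_le : ⟪ghat₁, H₁ ghat₁⟫ ≤ lam₁ :=
    LinearMap.IsSymmetric.real_inner_map_self_le_of_norm_eq_one hsym₁ h₁max.2
      (hghat₁ ▸ norm_smul_inv_norm hg₁)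
  have hq₂_le : ⟪ghat₂, H₂ ghat₂⟫ ≤ lam₂ :=
    LinearMap.IsSymmetric.real_inner_map_self_le_of_norm_eq_one hsym₂ h₂max.2
      (hghat₂ ▸ norm_smul_inv_norm hg₂)
  refine ⟨⟨?_, ?_⟩, fun hgv₁ hgv₂ ↦ ?_⟩
  · rw [hdiff]; gcongr ε ^ 2 / 2 * ?_; linarith
  · rw [hdiff]; gcongr ε ^ 2 / 2 * ?_; linarith
  · have hc : c = 1 := by rw [← hc₁, hgv₁, real_inner_self_eq_norm_sq, hv₁, one_pow]
    have hq₁' : ⟪ghat₁, H₁ ghat₁⟫ = lam₁ := by rw [hq₁, hh₁, hgv₁, sub_self, hc]; norm_num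
    have hq₂' : ⟪ghat₂, H₂ ghat₂⟫ = lam₂ := by rw [hq₂, hh₂, hgv₂, sub_self, hc]; norm_num
    exact ⟨by rw [hR₁', hq₁'], by rw [hR₂', hq₂'], by rw [hdiff, hq₁', hq₂']⟩

/-- Proposition 1 (exact form): the difference of the first-order robustness losses of two
models is sandwiched between linear expressions in the largest eigenvalues of the input
Hessians; under perfect alignment of the normalized input gradient with the top
eigenvector, the robustness loss is an increasing affine function of the largest
eigenvalue of the input Hessian. -/
theorem robustness_loss_correlates_with_largest_eigenvalue
    {E : Type*} [NormedAddCommGroup E] [InnerProductSpace ℝ E]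
    [FiniteDimensional ℝ E] [Nontrivial E]
    (x : E) (l₁ l₂ : E → ℝ) (g₁ g₂ : E) (hg₁ : g₁ ≠ 0) (hg₂ : g₂ ≠ 0)
    (H₁ H₂ : E →ₗ[ℝ] E)
    (hsym₁ : ∀ a b : E, ⟪H₁ a, b⟫ = ⟪a, H₁ b⟫)
    (hsym₂ : ∀ a b : E, ⟪H₂ a, b⟫ = ⟪a, H₂ b⟫)
    (hexp₁ : ∀ δ : E, l₁ (x + δ) = l₁ x + ⟪g₁, δ⟫ + (1 / 2) * ⟪δ, H₁ δ⟫)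
    (hexp₂ : ∀ δ : E, l₂ (x + δ) = l₂ x + ⟪g₂, δ⟫ + (1 / 2) * ⟪δ, H₂ δ⟫)
    (hl : l₁ x = l₂ x) (hnorm : ‖g₁‖ = ‖g₂‖)
    (lam₁ lam₂ : ℝ)
    (h₁max : IsGreatest {μ : ℝ | Module.End.HasEigenvalue H₁ μ} lam₁)
    (h₂max : IsGreatest {μ : ℝ | Module.End.HasEigenvalue H₂ μ} lam₂)
    (v₁ v₂ : E) (hv₁ : ‖v₁‖ = 1) (hv₂ : ‖v₂‖ = 1)
    (he₁ : H₁ v₁ = lam₁ • v₁) (he₂ : H₂ v₂ = lam₂ • v₂)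
    (ghat₁ ghat₂ : E) (hghat₁ : ghat₁ = ‖g₁‖⁻¹ • g₁) (hghat₂ : ghat₂ = ‖g₂‖⁻¹ • g₂)
    (c : ℝ) (hc₁ : ⟪ghat₁, v₁⟫ = c) (hc₂ : ⟪ghat₂, v₂⟫ = c)
    (h₁ h₂ : ℝ)
    (hh₁ : h₁ = ⟪ghat₁ - v₁, H₁ (ghat₁ - v₁)⟫)
    (hh₂ : h₂ = ⟪ghat₂ - v₂, H₂ (ghat₂ - v₂)⟫)
    (ε : ℝ) (hε : 0 < ε)
    (R₁ R₂ : ℝ) (hR₁ : R₁ = l₁ (x + ε • ghat₁)) (hR₂ : R₂ = l₂ (x + ε • ghat₂)) :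
    ((ε ^ 2 / 2) * ((2 * c - 1) * lam₂ - lam₁ + h₂) ≤ R₂ - R₁ ∧
        R₂ - R₁ ≤ (ε ^ 2 / 2) * (lam₂ - (2 * c - 1) * lam₁ - h₁)) ∧
      (ghat₁ = v₁ → ghat₂ = v₂ →
        R₁ = l₁ x + ε * ‖g₁‖ + (ε ^ 2 / 2) * lam₁ ∧
        R₂ = l₂ x + ε * ‖g₂‖ + (ε ^ 2 / 2) * lam₂ ∧
        R₂ - R₁ = (ε ^ 2 / 2) * (lam₂ - lam₁)) :=
  robustness_loss_correlates_with_largest_eigenvalue_general x l₁ l₂ g₁ g₂ hg₁ hg₂ H₁ H₂ hsym₁ hsym₂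
    hexp₁ hexp₂ hl hnorm lam₁ lam₂ h₁max h₂max v₁ v₂ hv₁ hv₂ he₁ he₂ ghat₁ ghat₂ hghat₁ hghat₂ c hc₁
    hc₂ h₁ h₂ hh₁ hh₂ ε R₁ R₂ hR₁ hR₂
end
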